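/- arXiv:1404.3516 — 2 statements merged into one kernel-verified Lean document; each statement's English description precedes it below -/
import Mathlib

section
/- With G a finite abelian group, (p_g) strictly positive probabilities, ℙ the Bernoulli measure on G^ℕ, N ≥ 2, Φ the width-N sliding-window sum map, ℙ₀ = ℙ∘Φ^{-1}, and λ = min_g p_g: ℙ₀ is ψ-mixing; specifically |ℙ₀(E ∩ T^{-(n+l)}F) − ℙ₀(E)ℙ₀(F)| ≤ (1 + λ^{-N+1})ℙ₀(E)ℙ₀(F) for 0 ≤ l < N−1 and ℙ₀(E ∩ T^{-(n+l)}F) = ℙ₀(E)ℙ₀(F) for l ≥ N−1, for every E measurable with respect to coordinates 0,…,n−1 and every measurable F. -/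
open MeasureTheory
open scoped BigOperators

def shift {𝒜 : Type*} (ω : ℕ → 𝒜) : ℕ → 𝒜 := fun n => ω (n + 1)

def windowSum {G : Type*} [AddCommMonoid G] (N : ℕ) (ω : ℕ → G) : ℕ → G :=
  fun j => ∑ i ∈ Finset.range N, ω (j + i)

/-!
Write `T = shift`, `A = Φ⁻¹ E` and `B = Φ⁻¹ F` for `Φ = windowSum N`. The measure `ℙ` is the
product `infinitePi (fun _ ↦ ν)` of its one-site law, so `T` preserves it and the first `m`
coordinates are independent of `T^[m]`. Since `Φ` commutes with `T` and `(Φ ω) j` involves only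
`ω j, …, ω (j + N - 1)`, the set `A` depends on the first `n + N - 1` coordinates, which gives the
independence of `A` and `T^{-k} B` as soon as `k = n + l ≥ n + N - 1`. For `l < N - 1` the two
blocks overlap in `t = N - 1 - l` coordinates. Splitting on their values `x`, and writing `B_x` for
the set of tails completing `x` to a point of `B`, we get `ℙ (A ∩ T^{-k} B) ≤ ∑ₓ ℙ A ℙ B_x`, while
`λ^t ℙ B_x ≤ ℙ {ω ∣ ω↾t = x} ℙ B_x = ℙ ({ω ∣ ω↾t = x} ∩ B)`; summing over `x` yields the factor
`λ^{-t} ≤ λ^{-(N-1)}`.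
-/

open Measure Preorder
open scoped ENNReal

lemma shift_iterate_apply {X : Type*} (k : ℕ) (ω : ℕ → X) (i : ℕ) :
    shift^[k] ω i = ω (i + k) := by
  induction k generalizing ω with
  | zero => rfl
  | succ k ih => simp only [Function.iterate_succ_apply, ih, shift, Nat.add_assoc]

lemma shift_iterate_eq {X : Type*} (k : ℕ) :
    (shift^[k] : (ℕ → X) → ℕ → X) = fun ω i ↦ ω (i + k) :=
  funext fun ω ↦ funext (shift_iterate_apply k ω)

lemma measurable_shift {X : Type*} [MeasurableSpace X] :
    Measurable (shift : (ℕ → X) → ℕ → X) :=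
  measurable_pi_lambda _ fun _ ↦ measurable_pi_apply _

def prepend {X : Type*} {t : ℕ} (x : Fin t → X) (τ : ℕ → X) : ℕ → X :=
  fun j ↦ if h : j < t then x ⟨j, h⟩ else τ (j - t)

lemma prepend_restrict_shift_iterate {X : Type*} (t : ℕ) (ω : ℕ → X) :
    prepend (fun i : Fin t ↦ ω i) (shift^[t] ω) = ω := by
  funext j
  by_cases h : j < t
  · simp [prepend, h]
  · simp [prepend, h, shift_iterate_apply, Nat.sub_add_cancel (not_lt.1 h)]

lemma measurable_prepend {X : Type*} [MeasurableSpace X] {t : ℕ} (x : Fin t → X) :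
    Measurable (prepend x) := by
  refine measurable_pi_iff.2 fun j ↦ ?_
  by_cases h : j < t
  · simp only [prepend, h, dite_true, measurable_const]
  · simp only [prepend, h, dite_false]
    exact measurable_pi_apply _

lemma measure_eq_sum_preimage_singleton_inter {α β : Type*} [MeasurableSpace α] [Fintype β]
    [MeasurableSpace β] [MeasurableSingletonClass β] (μ : Measure α) {f : α → β}
    (hf : Measurable f) (C : Set α) : μ C = ∑ y, μ (f ⁻¹' {y} ∩ C) := by
  simp_rw [← μ.restrict_apply (hf (measurableSet_singleton _))]
  rw [sum_measure_preimage_singleton _ fun y _ ↦ hf (measurableSet_singleton y)]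
  simp

section Bernoulli

open ProbabilityTheory

variable {X : Type*} [MeasurableSpace X] (ν : Measure X) [IsProbabilityMeasure ν]

lemma eq_infinitePi_of_measure_cylinder [Countable X] [MeasurableSingletonClass X]
    {P : Measure (ℕ → X)} [IsFiniteMeasure P]
    (h : ∀ (r : ℕ) (w : ℕ → X), P {ω | ∀ i < r, ω i = w i} = ∏ i ∈ Finset.range r, ν {w i}) :
    P = infinitePi fun _ ↦ ν := by
  refine ((isProjectiveLimit_nat_iff (isProjectiveMeasureFamily_pi fun _ ↦ ν) P).2
    fun n ↦ ?_).unique (isProjectiveLimit_infinitePi fun _ ↦ ν)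
  refine ext_of_singleton fun x ↦ ?_
  set w : ℕ → X := fun j ↦
    if hj : j ≤ n then x ⟨j, Finset.mem_Iic.2 hj⟩ else x ⟨n, Finset.mem_Iic.2 le_rfl⟩
  have hw : ∀ i : Finset.Iic n, w i = x i := fun i ↦ dif_pos (Finset.mem_Iic.1 i.2)
  have hcyl : frestrictLe (π := fun _ ↦ X) n ⁻¹' {x} = {ω | ∀ i < n + 1, ω i = w i} := by
    ext ω
    simp only [Set.mem_preimage, Set.mem_singleton_iff, funext_iff, frestrictLe_apply,
      Set.mem_ofPred_eq, Nat.lt_succ_iff, Subtype.forall, Finset.mem_Iic]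
    exact forall₂_congr fun i hi ↦ by rw [← hw ⟨i, Finset.mem_Iic.2 hi⟩]
  rw [map_apply (measurable_frestrictLe n) (measurableSet_singleton x), hcyl, h, pi_singleton,
    Nat.range_succ_eq_Iic, ← Finset.prod_coe_sort]
  simp only [hw]

lemma measurePreserving_shift_iterate (k : ℕ) :
    MeasurePreserving (shift^[k]) (infinitePi fun _ : ℕ ↦ ν) (infinitePi fun _ : ℕ ↦ ν) := by
  refine ⟨measurable_shift.iterate k, ?_⟩
  rw [shift_iterate_eq, map_infinitePi_infinitePi_of_inj (add_left_injective k)]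

lemma infinitePi_restrict_preimage_singleton [MeasurableSingletonClass X] {t : ℕ}
    (x : Fin t → X) :
    infinitePi (fun _ : ℕ ↦ ν) ((fun ω (i : Fin t) ↦ ω i) ⁻¹' {x}) = ∏ i, ν {x i} := by
  rw [← map_apply (by fun_prop) (measurableSet_singleton x),
    map_infinitePi_infinitePi_of_inj Fin.val_injective, infinitePi_singleton_of_fintype]

lemma infinitePi_inter_shift_preimage {m : ℕ} {A B : Set (ℕ → X)}
    (hA : MeasurableSet[MeasurableSpace.comap (fun ω (i : Fin m) ↦ ω i) inferInstance] A)
    (hB : MeasurableSet B) :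
    infinitePi (fun _ : ℕ ↦ ν) (A ∩ shift^[m] ⁻¹' B) =
      infinitePi (fun _ : ℕ ↦ ν) A * infinitePi (fun _ : ℕ ↦ ν) B := by
  set coord : ℕ → MeasurableSpace (ℕ → X) :=
    fun i ↦ MeasurableSpace.comap (fun ω ↦ ω i) inferInstance
  have hcoord : ∀ i, Measurable[coord i] fun ω : ℕ → X ↦ ω i := fun i ↦ comap_measurable _
  have hindep : Indep (⨆ i ∈ Set.Iio m, coord i) (⨆ i ∈ Set.Ici m, coord i)
      (infinitePi fun _ ↦ ν) :=
    indep_iSup_of_disjoint (fun i ↦ (measurable_pi_apply i).comap_le)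
      ((iIndepFun_iff_iIndep _ _ _).1
        (iIndepFun_infinitePi (X := fun _ ↦ id) fun _ ↦ measurable_id))
      (Set.Iio_disjoint_Ici le_rfl)
  have hA' : Measurable[⨆ i ∈ Set.Iio m, coord i] fun ω (i : Fin m) ↦ ω i :=
    @measurable_pi_lambda _ _ _ (⨆ i ∈ Set.Iio m, coord i) _ _ fun i ↦
      (hcoord i).mono (le_iSup₂ (f := fun j _ ↦ coord j) (i : ℕ) i.2) le_rfl
  have hB' : Measurable[⨆ i ∈ Set.Ici m, coord i] (shift^[m] : (ℕ → X) → ℕ → X) := by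
    rw [shift_iterate_eq]
    exact @measurable_pi_lambda _ _ _ (⨆ i ∈ Set.Ici m, coord i) _ _ fun i ↦
      (hcoord (i + m)).mono
        (le_iSup₂ (f := fun j _ ↦ coord j) (i + m) (Nat.le_add_left m i)) le_rfl
  obtain ⟨S, hS, rfl⟩ := hA
  rw [(Indep_iff _ _ _).1 hindep _ _ (hA' hS) (hB' hB),
    (measurePreserving_shift_iterate ν m).measure_preimage hB.nullMeasurableSet]

lemma infinitePi_inter_shift_preimage_of_le {m k : ℕ} (hmk : m ≤ k) {A B : Set (ℕ → X)}
    (hA : MeasurableSet[MeasurableSpace.comap (fun ω (i : Fin m) ↦ ω i) inferInstance] A)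
    (hB : MeasurableSet B) :
    infinitePi (fun _ : ℕ ↦ ν) (A ∩ shift^[k] ⁻¹' B) =
      infinitePi (fun _ : ℕ ↦ ν) A * infinitePi (fun _ : ℕ ↦ ν) B := by
  obtain ⟨j, rfl⟩ := Nat.exists_eq_add_of_le' hmk
  have hj := measurePreserving_shift_iterate ν j
  rw [Function.iterate_add, Set.preimage_comp, infinitePi_inter_shift_preimage ν hA
    (hj.measurable hB), hj.measure_preimage hB.nullMeasurableSet]

lemma infinitePi_preimage_prepend_le [MeasurableSingletonClass X] {c : ℝ≥0∞} (hc0 : c ≠ 0)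
    (hc : ∀ g, c ≤ ν {g}) {t : ℕ} (x : Fin t → X) {B : Set (ℕ → X)} (hB : MeasurableSet B) :
    infinitePi (fun _ : ℕ ↦ ν) (prepend x ⁻¹' B) ≤
      c⁻¹ ^ t * infinitePi (fun _ : ℕ ↦ ν) ((fun ω (i : Fin t) ↦ ω i) ⁻¹' {x} ∩ B) := by
  have hslice : (fun ω (i : Fin t) ↦ ω i) ⁻¹' {x} ∩ B =
      (fun ω (i : Fin t) ↦ ω i) ⁻¹' {x} ∩ shift^[t] ⁻¹' (prepend x ⁻¹' B) := by
    ext ω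
    simp only [Set.mem_inter_iff, Set.mem_preimage, Set.mem_singleton_iff, and_congr_right_iff]
    rintro rfl
    rw [prepend_restrict_shift_iterate]
  have hmass : c ^ t ≤ infinitePi (fun _ : ℕ ↦ ν) ((fun ω (i : Fin t) ↦ ω i) ⁻¹' {x}) := by
    rw [infinitePi_restrict_preimage_singleton]
    calc c ^ t = ∏ _i : Fin t, c := by simp
      _ ≤ ∏ i, ν {x i} := Finset.prod_le_prod' fun i _ ↦ hc (x i)
  rw [← ENNReal.inv_pow, ← ENNReal.div_eq_inv_mul,
    ENNReal.le_div_iff_mul_le (Or.inl (pow_ne_zero _ hc0)) (Or.inr (measure_ne_top _ _)), hslice,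
    infinitePi_inter_shift_preimage ν ⟨{x}, measurableSet_singleton x, rfl⟩
      (measurable_prepend x hB), mul_comm]
  gcongr

lemma infinitePi_inter_shift_preimage_le [Fintype X] [MeasurableSingletonClass X] {c : ℝ≥0∞}
    (hc0 : c ≠ 0) (hc : ∀ g, c ≤ ν {g}) {k t : ℕ} {A B : Set (ℕ → X)}
    (hA : MeasurableSet[MeasurableSpace.comap (fun ω (i : Fin (k + t)) ↦ ω i) inferInstance] A)
    (hB : MeasurableSet B) :
    infinitePi (fun _ : ℕ ↦ ν) (A ∩ shift^[k] ⁻¹' B) ≤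
      c⁻¹ ^ t * (infinitePi (fun _ : ℕ ↦ ν) A * infinitePi (fun _ : ℕ ↦ ν) B) := by
  set β := infinitePi (fun _ : ℕ ↦ ν)
  set π : (ℕ → X) → Fin t → X := fun ω i ↦ ω i
  have hπ : Measurable π := by fun_prop
  have hsub : ∀ x, (π ∘ shift^[k]) ⁻¹' {x} ∩ (A ∩ shift^[k] ⁻¹' B) ⊆
      A ∩ shift^[k + t] ⁻¹' (prepend x ⁻¹' B) := by
    rintro x ω ⟨rfl, hωA, hωB⟩
    refine ⟨hωA, ?_⟩
    show prepend (fun i : Fin t ↦ shift^[k] ω i) (shift^[k + t] ω) ∈ B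
    rwa [add_comm, Function.iterate_add_apply, prepend_restrict_shift_iterate]
  calc β (A ∩ shift^[k] ⁻¹' B)
      = ∑ x, β ((π ∘ shift^[k]) ⁻¹' {x} ∩ (A ∩ shift^[k] ⁻¹' B)) :=
        measure_eq_sum_preimage_singleton_inter β (hπ.comp (measurable_shift.iterate k)) _
    _ ≤ ∑ x, β A * β (prepend x ⁻¹' B) := by
        gcongr with x
        rw [← infinitePi_inter_shift_preimage ν hA (measurable_prepend x hB)]
        exact measure_mono (hsub x)
    _ ≤ ∑ x, β A * (c⁻¹ ^ t * β (π ⁻¹' {x} ∩ B)) := by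
        gcongr with x
        exact infinitePi_preimage_prepend_le ν hc0 hc x hB
    _ = c⁻¹ ^ t * (β A * β B) := by
        rw [measure_eq_sum_preimage_singleton_inter β hπ B, Finset.mul_sum, Finset.mul_sum]
        exact Finset.sum_congr rfl fun x _ ↦ mul_left_comm _ _ _

end Bernoulli

lemma exists_eq_infinitePi_of_measure_cylinder {X : Type*} [MeasurableSpace X] [Countable X]
    [MeasurableSingletonClass X] {p : X → ℝ} (hp : ∀ g, 0 ≤ p g) {P : Measure (ℕ → X)}
    [IsProbabilityMeasure P]
    (h : ∀ (r : ℕ) (w : ℕ → X),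
      P {ω | ∀ i < r, ω i = w i} = ENNReal.ofReal (∏ i ∈ Finset.range r, p (w i))) :
    ∃ ν : Measure X, ∃ _ : IsProbabilityMeasure ν,
      (∀ g, ν {g} = ENNReal.ofReal (p g)) ∧ P = infinitePi fun _ ↦ ν := by
  have hν : ∀ g, P.map (· 0) {g} = ENNReal.ofReal (p g) := fun g ↦ by
    rw [map_apply (measurable_pi_apply 0) (measurableSet_singleton g),
      ← Finset.prod_range_one (fun _ ↦ p g), ← h 1 fun _ ↦ g]
    simp [Set.preimage]
  have := isProbabilityMeasure_map (μ := P) (measurable_pi_apply 0).aemeasurable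
  refine ⟨_, this, hν, eq_infinitePi_of_measure_cylinder _ fun r w ↦ ?_⟩
  rw [h, ENNReal.ofReal_prod_of_nonneg fun i _ ↦ hp (w i)]
  simp only [hν]

lemma windowSum_commute_shift {G : Type*} [AddCommMonoid G] (N : ℕ) :
    Function.Commute (windowSum N : (ℕ → G) → ℕ → G) shift := by
  intro ω
  funext j
  simp only [windowSum, shift, Nat.add_right_comm]

section Measurability

variable {G : Type*} [AddCommMonoid G] [MeasurableSpace G] [MeasurableAdd₂ G]

lemma measurable_windowSum (N : ℕ) : Measurable (windowSum N : (ℕ → G) → ℕ → G) :=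
  measurable_pi_lambda _ fun _ ↦ Finset.measurable_sum _ fun _ _ ↦ measurable_pi_apply _

lemma map_windowSum_inter_shift_preimage (N : ℕ) (μ : Measure (ℕ → G)) {E F : Set (ℕ → G)}
    (hE : MeasurableSet E) (hF : MeasurableSet F) (k : ℕ) :
    μ.map (windowSum N) (E ∩ shift^[k] ⁻¹' F) =
      μ (windowSum N ⁻¹' E ∩ shift^[k] ⁻¹' (windowSum N ⁻¹' F)) := by
  rw [map_apply (measurable_windowSum N) (hE.inter (measurable_shift.iterate k hF)),
    Set.preimage_inter, ← Set.preimage_comp, ← Set.preimage_comp,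
    ((windowSum_commute_shift N).iterate_right k).comp_eq]

lemma measurableSet_windowSum_preimage (N : ℕ) {n : ℕ} {E : Set (ℕ → G)}
    (hE : MeasurableSet[MeasurableSpace.comap (fun ω (i : Fin n) ↦ ω i) inferInstance] E) :
    MeasurableSet[MeasurableSpace.comap (fun ω (i : Fin (n + (N - 1))) ↦ ω i) inferInstance]
      (windowSum N ⁻¹' E) := by
  set π : (ℕ → G) → Fin (n + (N - 1)) → G := fun ω i ↦ ω i
  set 𝓕 := MeasurableSpace.comap π inferInstance
  have hcoord : ∀ i < n + (N - 1), Measurable[𝓕] fun ω : ℕ → G ↦ ω i := fun i hi ↦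
    (measurable_pi_apply (⟨i, hi⟩ : Fin (n + (N - 1)))).comp (comap_measurable π)
  have hwindow : Measurable[𝓕] fun ω (j : Fin n) ↦ windowSum N ω j :=
    @measurable_pi_lambda _ _ _ 𝓕 _ _ fun j ↦ Finset.measurable_sum _ fun i hi ↦
      hcoord _ (by have := Finset.mem_range.1 hi; omega)
  obtain ⟨S, hS, rfl⟩ := hE
  exact hwindow hS

end Measurability

lemma abs_toReal_sub_mul_le_of_le {x a b K : ℝ≥0∞} (h : x ≤ K * (a * b)) (hK : K ≠ ⊤)
    (ha : a ≠ ⊤) (hb : b ≠ ⊤) :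
    |x.toReal - a.toReal * b.toReal| ≤ (1 + K.toReal) * a.toReal * b.toReal := by
  have hx := ENNReal.toReal_mono (by finiteness) h
  rw [ENNReal.toReal_mul, ENNReal.toReal_mul] at hx
  have hab : 0 ≤ a.toReal * b.toReal := by positivity
  rw [abs_le]
  constructor <;> nlinarith [ENNReal.toReal_nonneg (a := x), ENNReal.toReal_nonneg (a := K)]

theorem windowSum_pushforward_psi_mixing_general {G : Type*} [AddCommGroup G] [Fintype G]
    [MeasurableSpace G] [MeasurableSingletonClass G]
    (p : G → ℝ) (hp : ∀ g, p g ∈ Set.Ioo (0 : ℝ) 1)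
    (lam : ℝ) (hlam : IsLeast (Set.range p) lam)
    (ℙ : Measure (ℕ → G)) [IsProbabilityMeasure ℙ]
    (hbern : ∀ (n : ℕ) (w : ℕ → G),
      ℙ {ω | ∀ i < n, ω i = w i} = ENNReal.ofReal (∏ i ∈ Finset.range n, p (w i)))
    (N : ℕ) (ℙ₀ : Measure (ℕ → G)) (hℙ₀ : ℙ₀ = ℙ.map (windowSum N))
    (n : ℕ) (E F : Set (ℕ → G))
    (hE : MeasurableSet[MeasurableSpace.comap (fun ω (i : Fin n) => ω i) inferInstance] E)
    (hF : MeasurableSet F) :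
    (∀ l, l < N - 1 →
      |(ℙ₀ (E ∩ (shift^[n + l]) ⁻¹' F)).toReal - (ℙ₀ E).toReal * (ℙ₀ F).toReal| ≤
        (1 + lam⁻¹ ^ (N - 1)) * (ℙ₀ E).toReal * (ℙ₀ F).toReal) ∧
    (∀ l, N - 1 ≤ l → ℙ₀ (E ∩ (shift^[n + l]) ⁻¹' F) = ℙ₀ E * ℙ₀ F) := by
  obtain ⟨ν, _, hν, rfl⟩ := exists_eq_infinitePi_of_measure_cylinder (fun g ↦ (hp g).1.le) hbern
  have hEm : MeasurableSet E := Measurable.comap_le (by fun_prop) _ hE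
  have hA := measurableSet_windowSum_preimage N hE
  have hB := measurable_windowSum N hF
  subst hℙ₀
  rw [map_apply (measurable_windowSum N) hEm, map_apply (measurable_windowSum N) hF]
  simp_rw [map_windowSum_inter_shift_preimage N _ hEm hF]
  refine ⟨fun l hl ↦ ?_, fun l hl ↦ infinitePi_inter_shift_preimage_of_le _ (by omega) hA hB⟩
  obtain ⟨g₀, hg₀⟩ := hlam.1
  have hlam0 : 0 < lam := hg₀ ▸ (hp g₀).1
  have hc : ∀ g, ENNReal.ofReal lam ≤ ν {g} := fun g ↦
    (hν g).symm ▸ ENNReal.ofReal_le_ofReal (hlam.2 ⟨g, rfl⟩)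
  have hpow : (ENNReal.ofReal lam)⁻¹ ^ (N - 1 - l) ≤ (ENNReal.ofReal lam)⁻¹ ^ (N - 1) :=
    pow_le_pow_right₀ (ENNReal.one_le_inv.2 (ENNReal.ofReal_le_one.2 (hg₀ ▸ (hp g₀).2.le)))
      (Nat.sub_le _ _)
  have hbound := (infinitePi_inter_shift_preimage_le _ (ENNReal.ofReal_pos.2 hlam0).ne' hc
    (k := n + l) (by rwa [show n + l + (N - 1 - l) = n + (N - 1) by omega]) hB).trans
    (mul_le_mul_left hpow _)
  convert abs_toReal_sub_mul_le_of_le hbound (by finiteness) (measure_ne_top _ _)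
    (measure_ne_top _ _) using 4
  rw [ENNReal.toReal_pow, ENNReal.toReal_inv, ENNReal.toReal_ofReal hlam0.le]

/-- the pushforward `ℙ₀ = ℙ∘Φ⁻¹` of the Bernoulli measure under the
width-`N` sliding sum is ψ-mixing: with `λ = min_g p_g`, for `0 ≤ l < N−1`,
`|ℙ₀(E ∩ T^{-(n+l)}F) − ℙ₀(E)ℙ₀(F)| ≤ (1 + λ^{-(N−1)}) ℙ₀(E)ℙ₀(F)`,
and for `l ≥ N−1`, `ℙ₀(E ∩ T^{-(n+l)}F) = ℙ₀(E)ℙ₀(F)`, for every `E` measurable with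
respect to coordinates `0,…,n−1` and every measurable `F`. -/
theorem windowSum_pushforward_psi_mixing {G : Type*} [AddCommGroup G] [Fintype G]
    [MeasurableSpace G] [MeasurableSingletonClass G]
    (p : G → ℝ) (hp : ∀ g, p g ∈ Set.Ioo (0 : ℝ) 1) (hsum : ∑ g, p g = 1)
    (lam : ℝ) (hlam : IsLeast (Set.range p) lam)
    (ℙ : Measure (ℕ → G)) [IsProbabilityMeasure ℙ]
    (hbern : ∀ (n : ℕ) (w : ℕ → G),
      ℙ {ω | ∀ i < n, ω i = w i} = ENNReal.ofReal (∏ i ∈ Finset.range n, p (w i)))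
    (N : ℕ) (hN : 2 ≤ N) (ℙ₀ : Measure (ℕ → G)) (hℙ₀ : ℙ₀ = ℙ.map (windowSum N))
    (n : ℕ) (E F : Set (ℕ → G))
    (hE : MeasurableSet[MeasurableSpace.comap (fun ω (i : Fin n) => ω i) inferInstance] E)
    (hF : MeasurableSet F) :
    (∀ l, l < N - 1 →
      |(ℙ₀ (E ∩ (shift^[n + l]) ⁻¹' F)).toReal - (ℙ₀ E).toReal * (ℙ₀ F).toReal| ≤
        (1 + lam⁻¹ ^ (N - 1)) * (ℙ₀ E).toReal * (ℙ₀ F).toReal) ∧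
    (∀ l, N - 1 ≤ l → ℙ₀ (E ∩ (shift^[n + l]) ⁻¹' F) = ℙ₀ E * ℙ₀ F) :=
  windowSum_pushforward_psi_mixing_general p hp lam hlam ℙ hbern N ℙ₀ hℙ₀ n E F hE hF
end

section
/- With ℙ₀ as above (pushforward under Θ of the Bernoulli measure with marginals 2^{-a} on (ℕ₊)^ℕ): ℙ₀([1^{n+1}]₀ | [1^n]₀) ≤ 2^{-(n+1)} for every n ≥ 1, and hence lim_n ℙ₀([1^{n+1}]₀ | [1^n]₀) = 0. -/
/-!
`Θ ω` starts with `n` ones exactly when `ω` begins with an ascending run `a, a+1, …, a+n`, and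
these cylinders are disjoint for different `a`. Hence `ℙ₀[1^n]₀ = ∑_a ∏_{i ≤ n} 2^{-(a+i)}`, and
passing from `n` to `n+1` multiplies the `a`-th term by `2^{-(a+n+1)} ≤ 2^{-(n+2)}`.
-/

open MeasureTheory Filter Topology
open scoped ENNReal

instance : MeasurableSpace ℕ+ := ⊤

instance : MeasurableSingletonClass ℕ+ :=
  ⟨fun _ => MeasurableSpace.measurableSet_top⟩

/-- `θ(a₁, a₂) = 1` iff `a₂ = a₁ + 1`. -/
def theta (a₁ a₂ : ℕ+) : Bool := a₂ = a₁ + 1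

/-- `(Θω)_j = θ(ω_j, ω_{j+1})`. -/
def Theta (ω : ℕ → ℕ+) : ℕ → Bool := fun j => theta (ω j) (ω (j + 1))

def ascendingRun (a : ℕ+) (i : ℕ) : ℕ+ := ⟨a + i, Nat.add_pos_left a.pos i⟩

@[simp]
lemma coe_ascendingRun (a : ℕ+) (i : ℕ) : (ascendingRun a i : ℕ) = a + i := rfl

lemma ascendingRun_zero (a : ℕ+) : ascendingRun a 0 = a := rfl

lemma ascendingRun_succ (a : ℕ+) (i : ℕ) : ascendingRun a (i + 1) = ascendingRun a i + 1 :=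
  PNat.coe_injective (by simp [Nat.add_assoc])

lemma theta_eq_true_iff (a₁ a₂ : ℕ+) : theta a₁ a₂ = true ↔ a₂ = a₁ + 1 := by
  simp [theta]

lemma measurable_Theta : Measurable Theta := by
  refine measurable_pi_lambda _ fun j => ?_
  have h_theta : Measurable (Function.uncurry theta) := measurable_of_countable _
  have h_pair : Measurable fun ω : ℕ → ℕ+ => (ω j, ω (j + 1)) := by fun_prop
  exact h_theta.comp h_pair

lemma Theta_preimage_allTrue (n : ℕ) :
    Theta ⁻¹' {γ | ∀ j < n, γ j = true} =
      ⋃ a : ℕ+, {ω | ∀ i < n + 1, ω i = ascendingRun a i} := by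
  ext ω
  simp only [Set.mem_preimage, Set.mem_ofPred_eq, Set.mem_iUnion, Theta, theta_eq_true_iff]
  constructor
  · intro h
    refine ⟨ω 0, fun i hi => ?_⟩
    induction i with
    | zero => rfl
    | succ k ih => rw [h k (by omega), ih (by omega), ascendingRun_succ]
  · rintro ⟨a, ha⟩ j hj
    rw [ha (j + 1) (by omega), ha j (by omega), ascendingRun_succ]

lemma pairwise_disjoint_ascendingRun_cylinders (n : ℕ) :
    Pairwise (Function.onFun Disjoint
      fun a : ℕ+ => {ω : ℕ → ℕ+ | ∀ i < n + 1, ω i = ascendingRun a i}) := by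
  intro a b hab
  refine Set.disjoint_left.mpr fun ω ha hb => hab ?_
  simpa [ascendingRun_zero] using (ha 0 n.succ_pos).symm.trans (hb 0 n.succ_pos)

lemma map_Theta_allTrue (ℙ : Measure (ℕ → ℕ+))
    (hbern : ∀ (n : ℕ) (w : ℕ → ℕ+),
      ℙ {ω | ∀ i < n, ω i = w i} = ∏ i ∈ Finset.range n, (2 : ℝ≥0∞)⁻¹ ^ (w i : ℕ))
    (n : ℕ) :
    ℙ.map Theta {γ | ∀ j < n, γ j = true} =
      ∑' a : ℕ+, ∏ i ∈ Finset.range (n + 1), (2 : ℝ≥0∞)⁻¹ ^ ((a : ℕ) + i) := by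
  rw [Measure.map_apply measurable_Theta (by measurability), Theta_preimage_allTrue,
    measure_iUnion (pairwise_disjoint_ascendingRun_cylinders n) fun _ => by measurability]
  simp only [hbern, coe_ascendingRun]

lemma map_Theta_allTrue_succ_le (ℙ : Measure (ℕ → ℕ+))
    (hbern : ∀ (n : ℕ) (w : ℕ → ℕ+),
      ℙ {ω | ∀ i < n, ω i = w i} = ∏ i ∈ Finset.range n, (2 : ℝ≥0∞)⁻¹ ^ (w i : ℕ))
    (n : ℕ) :
    ℙ.map Theta {γ | ∀ j < n + 1, γ j = true} ≤
      (2 : ℝ≥0∞)⁻¹ ^ (n + 2) * ℙ.map Theta {γ | ∀ j < n, γ j = true} := by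
  rw [map_Theta_allTrue ℙ hbern, map_Theta_allTrue ℙ hbern, ← ENNReal.tsum_mul_left]
  refine ENNReal.tsum_le_tsum fun a => ?_
  rw [Finset.prod_range_succ, mul_comm ((2 : ℝ≥0∞)⁻¹ ^ (n + 2))]
  have h_exp : n + 2 ≤ (a : ℕ) + (n + 1) := by have := a.pos; omega
  exact mul_le_mul_right (pow_le_pow_right_of_le_one' (by norm_num) h_exp) _

theorem Theta_pushforward_conditional_tendsto_zero_general
    (ℙ : Measure (ℕ → ℕ+))
    (hbern : ∀ (n : ℕ) (w : ℕ → ℕ+),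
      ℙ {ω | ∀ i < n, ω i = w i} = ∏ i ∈ Finset.range n, (2 : ENNReal)⁻¹ ^ (w i : ℕ))
    (ratio : ℕ → ℝ)
    (hratio : ∀ n, ratio n =
      (ℙ.map Theta {γ | ∀ j < n + 1, γ j = true}).toReal /
        (ℙ.map Theta {γ | ∀ j < n, γ j = true}).toReal) :
    (∀ n, 1 ≤ n → ratio n ≤ (2 : ℝ)⁻¹ ^ (n + 1)) ∧
    Tendsto ratio atTop (𝓝 0) := by
  have hbound : ∀ n, ratio n ≤ (2 : ℝ)⁻¹ ^ (n + 1) := fun n => by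
    rw [hratio, ← ENNReal.toReal_div]
    calc _ ≤ ((2 : ℝ≥0∞)⁻¹ ^ (n + 2)).toReal :=
          ENNReal.toReal_mono (by simp)
            (ENNReal.div_le_of_le_mul (map_Theta_allTrue_succ_le ℙ hbern n))
      _ ≤ (2 : ℝ)⁻¹ ^ (n + 1) := by
          rw [ENNReal.toReal_pow, ENNReal.toReal_inv, ENNReal.toReal_ofNat]
          exact pow_le_pow_of_le_one (by norm_num) (by norm_num) (by omega)
  refine ⟨fun n _ => hbound n, squeeze_zero (fun n => by rw [hratio]; positivity) hbound ?_⟩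
  exact (tendsto_pow_atTop_nhds_zero_of_lt_one (by norm_num) (by norm_num)).comp
    (tendsto_add_atTop_nat 1)

/-- with `ℙ₀ = ℙ∘Θ⁻¹` as above,
`ℙ₀([1^{n+1}]₀ | [1^n]₀) ≤ 2^{-(n+1)}` for every `n ≥ 1`, hence the conditional
probabilities tend to `0`. -/
theorem Theta_pushforward_conditional_tendsto_zero
    (ℙ : Measure (ℕ → ℕ+)) [IsProbabilityMeasure ℙ]
    (hbern : ∀ (n : ℕ) (w : ℕ → ℕ+),
      ℙ {ω | ∀ i < n, ω i = w i} = ∏ i ∈ Finset.range n, (2 : ENNReal)⁻¹ ^ (w i : ℕ))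
    (ratio : ℕ → ℝ)
    (hratio : ∀ n, ratio n =
      (ℙ.map Theta {γ | ∀ j < n + 1, γ j = true}).toReal /
        (ℙ.map Theta {γ | ∀ j < n, γ j = true}).toReal) :
    (∀ n, 1 ≤ n → ratio n ≤ (2 : ℝ)⁻¹ ^ (n + 1)) ∧
    Tendsto ratio atTop (𝓝 0) :=
  Theta_pushforward_conditional_tendsto_zero_general ℙ hbern ratio hratio
end
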